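/- Let x be a sequence over a finite alphabet and u a primitive word (i.e., u = v^k implies k = 1). Suppose every word that occurs infinitely often in x occurs with bounded gaps in x, and every power u^n (n ∈ ℕ) occurs infinitely often in x. Then x is ultimately periodic, and the set of words occurring infinitely often in x equals the language of the periodic sequence uuu⋯. -/
import Mathlib


open List Filter

namespace Cobham

variable {A B : Type*}

/-- The word `w` occurs in the sequence `x` at position `i`. -/
def OccursAt (x : ℕ → A) (w : List A) (i : ℕ) : Prop :=
  w = List.ofFn (fun j : Fin w.length => x (i + j))

/-- `w` is a prefix of the sequence `x`. -/
def PrefixSeq (w : List A) (x : ℕ → A) : Prop := OccursAt x w 0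

/-- `w` is a factor of the sequence `x`. -/
def IsFactor (x : ℕ → A) (w : List A) : Prop := ∃ i, OccursAt x w i

/-- `w` occurs infinitely often in `x`. -/
def OccursInfinitelyOften (x : ℕ → A) (w : List A) : Prop :=
  ∀ N, ∃ i, N ≤ i ∧ OccursAt x w i

/-- `w` occurs in `x` with bounded gaps. -/
def BoundedGaps (x : ℕ → A) (w : List A) : Prop :=
  ∃ g, ∀ N, ∃ i, N ≤ i ∧ i ≤ N + g ∧ OccursAt x w i

/-- `x` is ultimately periodic. -/
def UltimatelyPeriodic (x : ℕ → A) : Prop :=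
  ∃ N p, 0 < p ∧ ∀ n, N ≤ n → x (n + p) = x n

/-- The `k`-fold concatenation `v^k` of a word with itself. -/
def wpow (v : List A) (k : ℕ) : List A := (List.replicate k v).flatten

/-- `u` is a primitive word: `u = v^k` implies `k = 1`. -/
def IsPrimitiveWord (u : List A) : Prop := ∀ (v : List A) (k : ℕ), u = wpow v k → k = 1

/-- Number of occurrences of the word `u` in the word `z`. -/
def occCount [DecidableEq A] (z u : List A) : ℕ :=
  ((List.range (z.length + 1)).filter (fun i => u.isPrefixOf (z.drop i))).length

/-- `w` is a return word to `u` in `x`. -/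
def IsReturnWord [DecidableEq A] (x : ℕ → A) (u w : List A) : Prop :=
  IsFactor x (w ++ u) ∧ u <+: (w ++ u) ∧ occCount (w ++ u) u = 2

/-- Extension of a morphism (given on letters) to words, by concatenation. -/
def mapWord (σ : A → List B) (w : List A) : List B := w.flatMap σ

/-- `x` is linearly recurrent with constant `L`. -/
def LinearlyRecurrent [DecidableEq A] (x : ℕ → A) (L : ℝ) : Prop :=
  (∀ w, IsFactor x w → BoundedGaps x w) ∧
    ∀ u w, IsFactor x u → IsReturnWord x u w → (w.length : ℝ) ≤ L * u.length

lemma occursAt_iff {x : ℕ → A} {w : List A} {i : ℕ} :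
    OccursAt x w i ↔ ∀ t (ht : t < w.length), w[t] = x (i + t) := by
  constructor
  · intro h t ht
    have h1 : w[t]? = (List.ofFn (fun j : Fin w.length => x (i + j)))[t]? := by
      conv_lhs => rw [h]
    rw [List.getElem?_eq_getElem ht, List.getElem?_ofFn] at h1
    simp [List.ofFnNthVal, ht] at h1
    exact h1
  · intro h
    apply List.ext_getElem (by simp)
    intro n h1 h2
    rw [List.getElem_ofFn]
    exact h n h1

lemma wpow_succ (u : List A) (m : ℕ) : wpow u (m + 1) = u ++ wpow u m := by
  simp [wpow, List.replicate_succ]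
lemma length_wpow (u : List A) (m : ℕ) : (wpow u m).length = m * u.length := by
  induction m with
  | zero => simp [wpow]
  | succ m ih => rw [wpow_succ]; simp [ih]; ring
lemma wpow_getElem? (u : List A) : ∀ m s, s < m * u.length →
    (wpow u m)[s]? = u[s % u.length]? := by
  intro m
  induction m with
  | zero => intro s hs; simp at hs
  | succ m ih =>
    intro s hs
    rw [wpow_succ]
    rcases Nat.lt_or_ge s u.length with h | h
    · rw [List.getElem?_append_left h, Nat.mod_eq_of_lt h]
    · rw [List.getElem?_append_right h, ih (s - u.length) (by
        have : (m + 1) * u.length = m * u.length + u.length := by ring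
        omega), Nat.mod_eq_sub_mod h]
lemma occursAt_wpow {x : ℕ → A} [Inhabited A] {u : List A} {m J : ℕ}
    (h : OccursAt x (wpow u m) J) {s : ℕ} (hs : s < m * u.length) :
    x (J + s) = u.getD (s % u.length) default := by
  have hp : 0 < u.length := by
    rcases Nat.eq_zero_or_pos u.length with h0 | h0
    · rw [h0, Nat.mul_zero] at hs; omega
    · exact h0
  have hlt : s % u.length < u.length := Nat.mod_lt _ hp
  rw [List.getD_eq_getElem u default hlt]
  have h1 := (occursAt_iff.mp h) s (by rw [length_wpow]; exact hs)
  rw [← h1]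
  have h2 : (wpow u m)[s]? = u[s % u.length]? := wpow_getElem? u m s hs
  rw [List.getElem?_eq_getElem (by rw [length_wpow]; exact hs),
    List.getElem?_eq_getElem hlt] at h2
  exact Option.some.inj h2


lemma key_align {A : Type*} [Inhabited A] {x : ℕ → A} {u : List A}
    (hbg : ∀ w, OccursInfinitelyOften x w → BoundedGaps x w)
    (hpow : ∀ n : ℕ, OccursInfinitelyOften x (wpow u n))
    (hp : 0 < u.length) {w : List A} (hw : OccursInfinitelyOften x w) :
    ∃ d, ∀ t (ht : t < w.length), w[t] = u.getD ((d + t) % u.length) default := by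
  obtain ⟨g, hg⟩ := hbg w hw
  set m := g + w.length + 1 with hm
  have hmp : g + w.length < m * u.length := by
    have h1 : m * 1 ≤ m * u.length := Nat.mul_le_mul_left m hp
    omega
  obtain ⟨i, -, hi⟩ := hpow m 0
  obtain ⟨j, hij, hjg, hj⟩ := hg i
  refine ⟨j - i, fun t ht => ?_⟩
  have h1 : w[t] = x (j + t) := (occursAt_iff.mp hj) t ht
  have h2 : x (i + (j - i + t)) = u.getD ((j - i + t) % u.length) default :=
    occursAt_wpow hi (by omega)
  rw [h1, show j + t = i + (j - i + t) by omega, h2]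

theorem ultimately_periodic_of_powers_recurrent {A : Type*} [Fintype A] [Inhabited A]
    (x : ℕ → A) (u : List A) (hprim : IsPrimitiveWord u)
    (hbg : ∀ w, OccursInfinitelyOften x w → BoundedGaps x w)
    (hpow : ∀ n : ℕ, OccursInfinitelyOften x (wpow u n)) :
    UltimatelyPeriodic x ∧
      ∀ w, (OccursInfinitelyOften x w ↔
        IsFactor (fun n => u.getD (n % u.length) default) w) := by
  classical
  have hp : 0 < u.length := by
    rcases Nat.eq_zero_or_pos u.length with h0 | h0
    · have hu : u = [] := List.eq_nil_of_length_eq_zero h0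
      have : (0 : ℕ) = 1 := hprim [] 0 (by simp [hu, wpow])
      omega
    · exact h0
  constructor
  · -- ultimate periodicity
    have hnb : ∀ f : Fin (u.length + 1) → A, ∃ B : ℕ,
        ¬ OccursInfinitelyOften x (List.ofFn f) →
          ∀ i, B ≤ i → ¬ OccursAt x (List.ofFn f) i := by
      intro f
      by_cases hf : OccursInfinitelyOften x (List.ofFn f)
      · exact ⟨0, fun h => absurd hf h⟩
      · unfold OccursInfinitelyOften at hf
        push_neg at hf
        obtain ⟨N, hN⟩ := hf
        exact ⟨N, fun _ i hi hocc => hN i hi hocc⟩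
    choose B hB using hnb
    refine ⟨Finset.univ.sup B, u.length, hp, fun n hn => ?_⟩
    set f : Fin (u.length + 1) → A := fun j => x (n + j) with hf
    set w := List.ofFn f with hwdef
    have hlen : w.length = u.length + 1 := by simp [hwdef]
    have hw : OccursAt x w n := by
      rw [occursAt_iff]
      intro t ht
      have h1 : w[t]? = some (x (n + t)) := by
        rw [hwdef, List.getElem?_ofFn]
        have ht' : t < u.length + 1 := hlen ▸ ht
        simp [List.ofFnNthVal, ht', hf]
      rw [List.getElem?_eq_getElem ht] at h1
      exact Option.some.inj h1
    have hio : OccursInfinitelyOften x w := by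
      by_contra hio
      exact hB f hio n (le_trans (Finset.le_sup (Finset.mem_univ f)) hn) hw
    obtain ⟨d, hd⟩ := key_align hbg hpow hp hio
    have e0 : w[0]'(by omega) = u.getD (d % u.length) default := by
      simpa using hd 0 (by omega)
    have ep : w[u.length]'(by omega) = u.getD ((d + u.length) % u.length) default :=
      hd u.length (by omega)
    rw [Nat.add_mod_right] at ep
    have hx0 : w[0]'(by omega) = x (n + 0) := (occursAt_iff.mp hw) 0 (by omega)
    have hxp : w[u.length]'(by omega) = x (n + u.length) := (occursAt_iff.mp hw) u.length (by omega)
    rw [← hxp, ep, ← e0, hx0, Nat.add_zero]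
  · intro w
    constructor
    · intro hw
      obtain ⟨d, hd⟩ := key_align hbg hpow hp hw
      refine ⟨d, ?_⟩
      rw [occursAt_iff]
      intro t ht
      exact hd t ht
    · rintro ⟨i, hocc⟩
      have hocc' := occursAt_iff.mp hocc
      intro N
      set m := i + w.length + 1 with hm
      have hmp : i + w.length < m * u.length := by
        have h1 : m * 1 ≤ m * u.length := Nat.mul_le_mul_left m hp
        omega
      obtain ⟨J, hJN, hJ⟩ := hpow m N
      refine ⟨J + i, le_trans hJN (Nat.le_add_right J i), ?_⟩
      rw [occursAt_iff]
      intro t ht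
      have h2 : x (J + (i + t)) = u.getD ((i + t) % u.length) default :=
        occursAt_wpow hJ (by omega)
      rw [hocc' t ht, show J + i + t = J + (i + t) by omega, h2]

end Cobham
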